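/- Suppose in addition that every e ∈ E has exactly two elements, so that H is a weighted graph and the normalized Laplacian is the single-valued linear map 𝓛f = (D − A)D⁻¹f, where A∈ℝ^{V×V} has entries A_{xy} = Σ_{e∈E, e={x,y}} w(e). For λ > 0 and x, y ∈ V define W_λ(x,y) := sup{⟨f − λ·(D−A)D⁻¹f, δ_x − δ_y⟩ : f ∈ Lip_w^1(V)} (the Kantorovich–Rubinstein dual expression of the L¹-Wasserstein distance W₁(m_x^{1−λ}, m_y^{1−λ}) between the lazy random-walk measures). Then for all x ≠ y, lim_{λ↓0} |W_λ(x,y) − KD_λ(x,y)|/λ = 0. -/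

import Mathlib

/-!
On a graph the Laplacian is single-valued and linear, `𝓛 = (D - A)D⁻¹`, so the resolvent is
`J_λ = (I + λ𝓛)⁻¹` and `(I - λ𝓛) - J_λ = -λ² 𝓛² J_λ`. Both Kantorovich differences are unchanged
when `f` is shifted by a multiple of the degree vector `d ∈ ker 𝓛`, and a shifted weighted
1-Lipschitz function satisfies `|f| ≤ diam(H) · d`. By the maximum principle `J_λ` preserves such
a bound while `𝓛` at most doubles it, so the two suprema differ by at most `8 diam(H) λ²`.
-/

open scoped BigOperators

noncomputable section

namespace HypRicci

variable {V : Type*} [Fintype V] [DecidableEq V]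

/-- A finite weighted hypergraph on vertex set `V`: a finite set of nonempty
hyperedges together with positive weights. -/
structure Hypergraph (V : Type*) [Fintype V] [DecidableEq V] : Type _ where
  E : Finset (Finset V)
  w : Finset V → ℝ
  w_pos : ∀ e ∈ E, 0 < w e
  e_nonempty : ∀ e ∈ E, e.Nonempty

/-- Degree `d_x = ∑_{e ∋ x} w(e)`. -/
def deg (H : Hypergraph V) (x : V) : ℝ := ∑ e ∈ H.E, if x ∈ e then H.w e else 0

/-- Volume `vol(V) = ∑_x d_x`. -/
def vol (H : Hypergraph V) : ℝ := ∑ x, deg H x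

/-- Weighted inner product `⟨f,g⟩ = ∑_x f(x) g(x) / d_x`. -/
def inn (H : Hypergraph V) (f g : V → ℝ) : ℝ := ∑ x, f x * g x / deg H x

/-- Norm associated to `inn`. -/
def nrm (H : Hypergraph V) (f : V → ℝ) : ℝ := Real.sqrt (inn H f f)

/-- Indicator function `δ_x`. -/
def delta (x : V) : V → ℝ := fun z => if z = x then 1 else 0

/-- Standard (unweighted) dot product `u^⊤ v`. -/
def dot (u v : V → ℝ) : ℝ := ∑ x, u x * v x

/-- Base polytope `B_e = conv{δ_x − δ_y : x,y ∈ e}`. -/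
def Bp (e : Finset V) : Set (V → ℝ) :=
  convexHull ℝ {b : V → ℝ | ∃ x ∈ e, ∃ y ∈ e, b = delta x - delta y}

/-- The multivalued hypergraph Laplacian
`L(f) = {∑_e w(e) (b_e^⊤ f) b_e : b_e ∈ argmax_{b ∈ B_e} b^⊤ f}`. -/
def Lap (H : Hypergraph V) (f : V → ℝ) : Set (V → ℝ) :=
  { g | ∃ b : Finset V → (V → ℝ),
      (∀ e ∈ H.E, b e ∈ Bp e ∧ ∀ b' ∈ Bp e, dot b' f ≤ dot (b e) f) ∧
      g = ∑ e ∈ H.E, (H.w e * dot (b e) f) • b e }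

/-- `D⁻¹ f`. -/
def Dinv (H : Hypergraph V) (f : V → ℝ) : V → ℝ := fun x => f x / deg H x

/-- Normalized Laplacian `𝓛(f) = L(D⁻¹ f)`. -/
def NL (H : Hypergraph V) (f : V → ℝ) : Set (V → ℝ) := Lap H (Dinv H f)

/-- The resolvent `J_λ = (I + λ𝓛)⁻¹`: it sends `f` to the (unique) `g` with
`f ∈ g + λ 𝓛(g)`. -/
def Resolvent (H : Hypergraph V) (l : ℝ) (f : V → ℝ) : V → ℝ :=
  Classical.epsilon fun g => ∃ h ∈ NL H g, f = g + l • h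

/-- Adjacency: `x ∼ y` iff some hyperedge contains both. -/
def Adj (H : Hypergraph V) (x y : V) : Prop := ∃ e ∈ H.E, x ∈ e ∧ y ∈ e

/-- There is a chain of length `n` of successively adjacent vertices from `x` to `y`. -/
def chainProp (H : Hypergraph V) (x y : V) (n : ℕ) : Prop :=
  ∃ z : ℕ → V, z 0 = x ∧ z n = y ∧ ∀ i < n, Adj H (z i) (z (i + 1))

/-- Connectedness of the hypergraph. -/
def Connected (H : Hypergraph V) : Prop := ∀ x y : V, ∃ n, chainProp H x y n

/-- Graph distance (as a natural number). -/
def hdistN (H : Hypergraph V) (x y : V) : ℕ := sInf {n | chainProp H x y n}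

/-- Graph distance `d(x,y)` as a real number. -/
def gdist (H : Hypergraph V) (x y : V) : ℝ := (hdistN H x y : ℝ)

/-- Diameter `diam(H) = max_{x,y} d(x,y)`. -/
def hdiam (H : Hypergraph V) : ℝ :=
  (((Finset.univ : Finset (V × V)).sup fun p => hdistN H p.1 p.2 : ℕ) : ℝ)

/-- Weighted `1`-Lipschitz functions: `⟨f, δ_x − δ_y⟩ ≤ d(x,y)` for all `x, y`. -/
def Lip1 (H : Hypergraph V) : Set (V → ℝ) :=
  { f | ∀ x y : V, inn H f (delta x - delta y) ≤ gdist H x y }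

/-- The `λ`-nonlinear Kantorovich difference. -/
def KD (H : Hypergraph V) (l : ℝ) (x y : V) : ℝ :=
  sSup { r | ∃ f ∈ Lip1 H, r = inn H (Resolvent H l f) (delta x - delta y) }

/-- `κ_λ(x,y) = 1 − KD_λ(x,y)/d(x,y)`. -/
def kappa (H : Hypergraph V) (l : ℝ) (x y : V) : ℝ := 1 - KD H l x y / gdist H x y

/-- Lower coarse Ricci curvature `κ̲(x,y) = liminf_{λ↓0} κ_λ(x,y)/λ`. -/
def kappaLower (H : Hypergraph V) (x y : V) : EReal :=
  Filter.liminf (fun l : ℝ => ((kappa H l x y / l : ℝ) : EReal)) (nhdsWithin 0 (Set.Ioi 0))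

/-- Upper coarse Ricci curvature `κ̄(x,y) = limsup_{λ↓0} κ_λ(x,y)/λ`. -/
def kappaUpper (H : Hypergraph V) (x y : V) : EReal :=
  Filter.limsup (fun l : ℝ => ((kappa H l x y / l : ℝ) : EReal)) (nhdsWithin 0 (Set.Ioi 0))

/-- Canonical restriction `𝓛⁰ f`: the unique element of minimal norm of `𝓛(f)`. -/
def L0 (H : Hypergraph V) (f : V → ℝ) : V → ℝ :=
  Classical.epsilon fun g => g ∈ NL H f ∧ ∀ h ∈ NL H f, nrm H g ≤ nrm H h

/-- The stationary distribution `π(x) = d_x / vol(V)`. -/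
def piH (H : Hypergraph V) : V → ℝ := fun x => deg H x / vol H

/-- The energy `Q(h) = (1/2) ∑_e w(e) max_{x,y ∈ e} (h(x) − h(y))²`. -/
def Qform (H : Hypergraph V) (h : V → ℝ) : ℝ :=
  (1 / 2) * ∑ e ∈ H.E, H.w e * sSup { r | ∃ x ∈ e, ∃ y ∈ e, r = (h x - h y) ^ 2 }

lemma csSup_le_csSup_add {α : Type*} {S : Set α} {F G : α → ℝ} {ε : ℝ} (hS : S.Nonempty)
    (hG : BddAbove {r | ∃ s ∈ S, r = G s}) (h : ∀ s ∈ S, F s ≤ G s + ε) :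
    sSup {r | ∃ s ∈ S, r = F s} ≤ sSup {r | ∃ s ∈ S, r = G s} + ε := by
  obtain ⟨s₀, hs₀⟩ := hS
  refine csSup_le ⟨_, s₀, hs₀, rfl⟩ ?_
  rintro _ ⟨s, hs, rfl⟩
  linarith [h s hs, le_csSup hG ⟨s, hs, rfl⟩]

lemma abs_csSup_sub_csSup_le {α : Type*} {S : Set α} {F G : α → ℝ} {ε : ℝ} (hS : S.Nonempty)
    (hG : BddAbove {r | ∃ s ∈ S, r = G s}) (h : ∀ s ∈ S, |F s - G s| ≤ ε) :
    |sSup {r | ∃ s ∈ S, r = F s} - sSup {r | ∃ s ∈ S, r = G s}| ≤ ε := by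
  have hF : BddAbove {r | ∃ s ∈ S, r = F s} := by
    obtain ⟨B, hB⟩ := hG
    refine ⟨B + ε, ?_⟩
    rintro _ ⟨s, hs, rfl⟩
    linarith [(abs_le.mp (h s hs)).2, hB ⟨s, hs, rfl⟩]
  rw [abs_le]
  constructor
  · have := csSup_le_csSup_add (F := G) (G := F) (ε := ε) hS hF fun s hs => by
      linarith [(abs_le.mp (h s hs)).1]
    linarith
  · have := csSup_le_csSup_add (F := F) (G := G) (ε := ε) hS hG fun s hs => by
      linarith [(abs_le.mp (h s hs)).2]
    linarith

omit [Fintype V] in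
lemma pair_eq_pair_iff {u v z y : V} (huv : u ≠ v) :
    ({u, v} : Finset V) = {z, y} ↔ z = u ∧ y = v ∨ z = v ∧ y = u := by
  constructor
  · intro h
    have hu : u ∈ ({z, y} : Finset V) := h ▸ Finset.mem_insert_self u {v}
    have hv : v ∈ ({z, y} : Finset V) := h ▸ by simp
    have hz : z ∈ ({u, v} : Finset V) := h.symm ▸ Finset.mem_insert_self z {y}
    simp only [Finset.mem_insert, Finset.mem_singleton] at hu hv hz
    grind
  · rintro (⟨rfl, rfl⟩ | ⟨rfl, rfl⟩)
    · rfl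
    · exact Finset.pair_comm _ _

lemma sum_ite_pair_eq {u v : V} (huv : u ≠ v) (φ : V → ℝ) (z : V) :
    ∑ y, (if ({u, v} : Finset V) = {z, y} then φ y else 0) =
      if z = u then φ v else if z = v then φ u else 0 := by
  simp only [pair_eq_pair_iff huv]
  by_cases hzu : z = u
  · simp [hzu, huv]
  · by_cases hzv : z = v <;> simp [hzu, hzv, huv.symm]

omit [DecidableEq V] in
lemma dot_smul (t : ℝ) (b φ : V → ℝ) : dot (t • b) φ = t * dot b φ := by
  simp only [dot, Pi.smul_apply, smul_eq_mul, Finset.mul_sum, mul_assoc]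

lemma dot_delta_sub_delta (u v : V) (φ : V → ℝ) : dot (delta u - delta v) φ = φ u - φ v := by
  simp [dot, delta, sub_mul, Finset.sum_sub_distrib]

lemma inn_delta_sub_delta (H : Hypergraph V) (h : V → ℝ) (a b : V) :
    inn H h (delta a - delta b) = h a / deg H a - h b / deg H b := by
  simp [inn, delta, mul_sub, sub_div, Finset.sum_sub_distrib, ite_div]

omit [Fintype V] in
lemma delta_sub_delta_mem_Bp {e : Finset V} {u v : V} (hu : u ∈ e) (hv : v ∈ e) :
    delta u - delta v ∈ Bp e :=
  subset_convexHull ℝ _ ⟨u, hu, v, hv, rfl⟩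

omit [Fintype V] in
lemma exists_smul_of_mem_Bp_pair {u v : V} {b : V → ℝ} (hb : b ∈ Bp ({u, v} : Finset V)) :
    ∃ t : ℝ, |t| ≤ 1 ∧ b = t • (delta u - delta v) := by
  refine convexHull_min (t := {b | ∃ t : ℝ, |t| ≤ 1 ∧ b = t • (delta u - delta v)}) ?_ ?_ hb
  · rintro b ⟨p, hp, q, hq, rfl⟩
    simp only [Finset.mem_insert, Finset.mem_singleton] at hp hq
    rcases hp with rfl | rfl <;> rcases hq with rfl | rfl
    · exact ⟨0, by norm_num, by simp⟩
    · exact ⟨1, by norm_num, by simp⟩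
    · exact ⟨-1, by norm_num, by simp⟩
    · exact ⟨0, by norm_num, by simp⟩
  · rintro _ ⟨t₁, ht₁, rfl⟩ _ ⟨t₂, ht₂, rfl⟩ a c ha hc hac
    refine ⟨a * t₁ + c * t₂, ?_, by simp only [smul_smul, add_smul]⟩
    calc |a * t₁ + c * t₂| ≤ a * |t₁| + c * |t₂| := by
          simpa [abs_mul, abs_of_nonneg ha, abs_of_nonneg hc] using abs_add_le (a * t₁) (c * t₂)
      _ ≤ a * 1 + c * 1 := by gcongr
      _ = 1 := by rw [mul_one, mul_one, hac]

lemma exists_isMaxOn_dot_Bp {e : Finset V} (he : e.Nonempty) (φ : V → ℝ) :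
    ∃ b ∈ Bp e, ∀ b' ∈ Bp e, dot b' φ ≤ dot b φ := by
  obtain ⟨x, hx⟩ := he
  have hfin : {b : V → ℝ | ∃ x ∈ e, ∃ y ∈ e, b = delta x - delta y}.Finite := by
    refine ((e ×ˢ e : Finset (V × V)).finite_toSet.image fun p => delta p.1 - delta p.2).subset ?_
    rintro _ ⟨x, hx, y, hy, rfl⟩
    exact ⟨(x, y), by simp [hx, hy], rfl⟩
  exact (hfin.isCompact_convexHull ℝ).exists_isMaxOn ⟨_, delta_sub_delta_mem_Bp hx hx⟩
    (f := fun b => dot b φ) (by unfold dot; fun_prop)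

lemma dot_smul_eq_of_isMaxOn_pair {u v : V} {φ b : V → ℝ}
    (hb : b ∈ Bp ({u, v} : Finset V)) (hmax : ∀ b' ∈ Bp ({u, v} : Finset V), dot b' φ ≤ dot b φ) :
    dot b φ • b = (φ u - φ v) • (delta u - delta v) := by
  obtain ⟨t, ht, rfl⟩ := exists_smul_of_mem_Bp_pair hb
  have h₁ := hmax _ (delta_sub_delta_mem_Bp (u := u) (v := v) (by simp) (by simp))
  have h₂ := hmax _ (delta_sub_delta_mem_Bp (u := v) (v := u) (by simp) (by simp))
  simp only [dot_smul, dot_delta_sub_delta] at h₁ h₂ ⊢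
  rw [smul_smul]
  congr 1
  rcases abs_le.mp ht with ⟨ht₁, ht₂⟩
  rcases le_total 0 (φ u - φ v) with hc | hc <;> nlinarith

lemma pair_smul_apply {u v : V} (huv : u ≠ v) (φ : V → ℝ) (z : V) :
    ((φ u - φ v) • (delta u - delta v)) z =
      (if z ∈ ({u, v} : Finset V) then φ z else 0) -
        ∑ y, if ({u, v} : Finset V) = {z, y} then φ y else 0 := by
  rw [sum_ite_pair_eq huv]
  by_cases hzu : z = u
  · subst hzu; simp [delta, huv]
  · by_cases hzv : z = v
    · subst hzv; simp [delta, hzu]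
    · simp [delta, hzu, hzv]

section GraphLaplacian

variable (H : Hypergraph V)

def adjWeight (z y : V) : ℝ := ∑ e ∈ H.E, if e = ({z, y} : Finset V) then H.w e else 0

/-- The normalized graph Laplacian `(D - A)D⁻¹`. -/
def graphLap : (V → ℝ) →ₗ[ℝ] V → ℝ where
  toFun f z := f z - ∑ y, adjWeight H z y * f y / deg H y
  map_add' f g := by
    ext z
    simp only [Pi.add_apply, mul_add, add_div, Finset.sum_add_distrib]
    ring
  map_smul' c f := by
    ext z
    simp only [Pi.smul_apply, smul_eq_mul, RingHom.id_apply, mul_sub, Finset.mul_sum]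
    congr 1
    exact Finset.sum_congr rfl fun y _ => by ring

lemma graphLap_apply (f : V → ℝ) (z : V) :
    graphLap H f z = f z - ∑ y, adjWeight H z y * f y / deg H y := rfl

lemma adjWeight_nonneg (z y : V) : 0 ≤ adjWeight H z y :=
  Finset.sum_nonneg fun e he => by split_ifs <;> simp [(H.w_pos e he).le]

lemma sum_edge_terms_eq (φ : V → ℝ) (z : V) :
    ∑ e ∈ H.E, H.w e * ((if z ∈ e then φ z else 0) - ∑ y, if e = {z, y} then φ y else 0) =
      deg H z * φ z - ∑ y, adjWeight H z y * φ y := by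
  simp only [deg, adjWeight, mul_sub, Finset.sum_sub_distrib, Finset.sum_mul, Finset.mul_sum,
    mul_ite, ite_mul, mul_zero, zero_mul]
  rw [Finset.sum_comm]

variable {H}

lemma sum_adjWeight (hg : ∀ e ∈ H.E, e.card = 2) (z : V) : ∑ y, adjWeight H z y = deg H z := by
  have h := sum_edge_terms_eq H (fun _ => 1) z
  rw [Finset.sum_eq_zero fun e he => ?_] at h
  · simp only [mul_one] at h
    linarith
  obtain ⟨u, v, huv, rfl⟩ := Finset.card_eq_two.mp (hg e he)
  have hpair := pair_smul_apply huv (fun _ => (1 : ℝ)) z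
  simp only [sub_self, zero_smul, Pi.zero_apply] at hpair
  rw [← hpair, mul_zero]

lemma eq_graphLap_of_mem_NL (hg : ∀ e ∈ H.E, e.card = 2) (hd : ∀ x, 0 < deg H x)
    {g h : V → ℝ} (hh : h ∈ NL H g) : h = graphLap H g := by
  obtain ⟨b, hb, rfl⟩ := hh
  ext z
  have hedge : ∀ e ∈ H.E, ((H.w e * dot (b e) (Dinv H g)) • b e) z =
      H.w e * ((if z ∈ e then Dinv H g z else 0) -
        ∑ y, if e = {z, y} then Dinv H g y else 0) := by
    intro e he
    obtain ⟨u, v, huv, rfl⟩ := Finset.card_eq_two.mp (hg e he)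
    rw [mul_smul, Pi.smul_apply, dot_smul_eq_of_isMaxOn_pair (hb _ he).1 (hb _ he).2,
      pair_smul_apply huv, smul_eq_mul]
  rw [Finset.sum_apply, Finset.sum_congr rfl hedge, sum_edge_terms_eq, graphLap_apply]
  simp only [Dinv, mul_div_cancel₀ _ (hd z).ne', mul_div_assoc]

lemma NL_eq_singleton (hg : ∀ e ∈ H.E, e.card = 2) (hd : ∀ x, 0 < deg H x) (g : V → ℝ) :
    NL H g = {graphLap H g} := by
  choose! b hb hmax using fun e (he : e ∈ H.E) =>
    exists_isMaxOn_dot_Bp (H.e_nonempty e he) (Dinv H g)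
  refine Set.eq_singleton_iff_nonempty_unique_mem.mpr
    ⟨⟨_, b, fun e he => ⟨hb e he, hmax e he⟩, rfl⟩, fun h hh => eq_graphLap_of_mem_NL hg hd hh⟩

end GraphLaplacian

section Resolvent

variable {H : Hypergraph V} (hg : ∀ e ∈ H.E, e.card = 2) (hd : ∀ x, 0 < deg H x)
include hg hd

lemma abs_sum_adjWeight_le {g : V → ℝ} {m : ℝ} (hm : ∀ y, |g y| ≤ m * deg H y) (z : V) :
    |∑ y, adjWeight H z y * g y / deg H y| ≤ m * deg H z := by
  calc |∑ y, adjWeight H z y * g y / deg H y|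
      ≤ ∑ y, |adjWeight H z y * g y / deg H y| := Finset.abs_sum_le_sum_abs _ _
    _ ≤ ∑ y, adjWeight H z y * m := by
      gcongr with y
      rw [abs_div, abs_mul, abs_of_nonneg (adjWeight_nonneg H z y), abs_of_pos (hd y),
        mul_div_assoc]
      gcongr
      · exact adjWeight_nonneg H z y
      · rw [div_le_iff₀ (hd y)]
        exact hm y
    _ = m * deg H z := by rw [← Finset.sum_mul, sum_adjWeight hg, mul_comm]

lemma abs_graphLap_le {g : V → ℝ} {m : ℝ} (hm : ∀ y, |g y| ≤ m * deg H y) (z : V) :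
    |graphLap H g z| ≤ 2 * m * deg H z := by
  calc |graphLap H g z| ≤ |g z| + |∑ y, adjWeight H z y * g y / deg H y| := abs_sub _ _
    _ ≤ m * deg H z + m * deg H z := add_le_add (hm z) (abs_sum_adjWeight_le hg hd hm z)
    _ = 2 * m * deg H z := by ring

/-- Maximum principle for `I + λ𝓛`, read off at a vertex maximising `|g z| / d_z`. -/
lemma abs_le_of_eq_add_smul_graphLap {l m : ℝ} (hl : 0 ≤ l) {f g : V → ℝ}
    (hf : ∀ z, |f z| ≤ m * deg H z) (hfg : f = g + l • graphLap H g) (z : V) :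
    |g z| ≤ m * deg H z := by
  obtain ⟨z₀, -, hz₀⟩ :=
    Finset.exists_max_image Finset.univ (fun z => |g z| / deg H z) ⟨z, Finset.mem_univ z⟩
  set μ := |g z₀| / deg H z₀
  have hμ : ∀ y, |g y| ≤ μ * deg H y := fun y =>
    (div_le_iff₀ (hd y)).mp (hz₀ y (Finset.mem_univ y))
  suffices hμm : μ ≤ m from (hμ z).trans (by gcongr; exact (hd z).le)
  have hrow : (1 + l) * g z₀ = f z₀ + l * ∑ y, adjWeight H z₀ y * g y / deg H y := by
    rw [hfg]
    simp only [Pi.add_apply, Pi.smul_apply, smul_eq_mul, graphLap_apply]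
    ring
  have : (1 + l) * (μ * deg H z₀) ≤ m * deg H z₀ + l * (μ * deg H z₀) :=
    calc (1 + l) * (μ * deg H z₀) = |(1 + l) * g z₀| := by
          rw [abs_mul, abs_of_pos (by linarith), div_mul_cancel₀ _ (hd z₀).ne']
      _ ≤ |f z₀| + l * |∑ y, adjWeight H z₀ y * g y / deg H y| := by
          rw [hrow, ← abs_of_nonneg hl, ← abs_mul, abs_of_nonneg hl]
          exact abs_add_le _ _
      _ ≤ m * deg H z₀ + l * (μ * deg H z₀) := by
          gcongr
          exacts [hf z₀, abs_sum_adjWeight_le hg hd hμ z₀]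
  exact le_of_mul_le_mul_right (by linarith) (hd z₀)

lemma injective_id_add_smul_graphLap {l : ℝ} (hl : 0 ≤ l) :
    Function.Injective (LinearMap.id + l • graphLap H : (V → ℝ) →ₗ[ℝ] V → ℝ) := by
  refine (injective_iff_map_eq_zero _).mpr fun g hg0 => funext fun z => ?_
  have hfg : 0 = g + l • graphLap H g := by simpa using hg0.symm
  simpa using abs_le_of_eq_add_smul_graphLap hg hd hl (m := 0) (by simp) hfg z

lemma resolvent_eq_iff {l : ℝ} (hl : 0 ≤ l) {f g : V → ℝ} :
    Resolvent H l f = g ↔ f = g + l • graphLap H g := by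
  have hinj := injective_id_add_smul_graphLap hg hd hl
  have hspec : f = Resolvent H l f + l • graphLap H (Resolvent H l f) := by
    obtain ⟨g₀, rfl⟩ := LinearMap.injective_iff_surjective.mp hinj f
    obtain ⟨h, hh, hfh⟩ := Classical.epsilon_spec (p := fun g => ∃ h ∈ NL H g, _ = g + l • h)
      ⟨g₀, graphLap H g₀, by rw [NL_eq_singleton hg hd]; rfl, rfl⟩
    rw [NL_eq_singleton hg hd, Set.mem_singleton_iff] at hh
    rwa [hh] at hfh
  constructor
  · rintro rfl
    exact hspec
  · intro hfg
    apply hinj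
    simp only [LinearMap.add_apply, LinearMap.id_apply, LinearMap.smul_apply]
    rw [← hspec, ← hfg]

lemma graphLap_deg : graphLap H (deg H) = 0 := by
  ext z
  simp [graphLap_apply, mul_div_cancel_right₀ _ (hd _).ne', sum_adjWeight hg]

lemma resolvent_sub_smul_deg {l : ℝ} (hl : 0 ≤ l) (f : V → ℝ) (c : ℝ) :
    Resolvent H l (f - c • deg H) = Resolvent H l f - c • deg H := by
  have hspec := (resolvent_eq_iff hg hd hl).mp (rfl : Resolvent H l f = _)
  rw [resolvent_eq_iff hg hd hl, map_sub, map_smul, graphLap_deg hg hd, smul_zero, sub_zero]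
  nth_rewrite 1 [hspec]
  abel

end Resolvent

section Kantorovich

variable {H : Hypergraph V}

lemma abs_inn_delta_sub_delta_le (hd : ∀ x, 0 < deg H x) {h : V → ℝ} {m : ℝ}
    (hm : ∀ z, |h z| ≤ m * deg H z) (a b : V) : |inn H h (delta a - delta b)| ≤ 2 * m := by
  have hbound : ∀ z, |h z / deg H z| ≤ m := fun z => by
    rw [abs_div, abs_of_pos (hd z), div_le_iff₀ (hd z)]
    exact hm z
  rw [inn_delta_sub_delta]
  linarith [abs_sub (h a / deg H a) (h b / deg H b), hbound a, hbound b]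

lemma inn_sub_smul_deg (hd : ∀ x, 0 < deg H x) (h : V → ℝ) (c : ℝ) (a b : V) :
    inn H (h - c • deg H) (delta a - delta b) = inn H h (delta a - delta b) := by
  simp only [inn_delta_sub_delta, Pi.sub_apply, Pi.smul_apply, smul_eq_mul, sub_div,
    mul_div_cancel_right₀ _ (hd _).ne']
  ring

lemma inn_sub_left (h₁ h₂ g : V → ℝ) : inn H (h₁ - h₂) g = inn H h₁ g - inn H h₂ g := by
  simp only [inn, Pi.sub_apply, sub_mul, sub_div, Finset.sum_sub_distrib]

lemma zero_mem_Lip1 : (0 : V → ℝ) ∈ Lip1 H := fun a b => by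
  simp [inn, gdist]

lemma gdist_le_hdiam (a b : V) : gdist H a b ≤ hdiam H := by
  unfold gdist hdiam
  exact_mod_cast Finset.le_sup (f := fun p : V × V => hdistN H p.1 p.2) (Finset.mem_univ (a, b))

lemma abs_sub_smul_deg_le_of_mem_Lip1 (hd : ∀ x, 0 < deg H x) {f : V → ℝ} (hf : f ∈ Lip1 H)
    (x z : V) : |(f - (f x / deg H x) • deg H) z| ≤ hdiam H * deg H z := by
  have h₁ := hf z x
  have h₂ := hf x z
  rw [inn_delta_sub_delta] at h₁ h₂
  have hfz : f z - f x / deg H x * deg H z = (f z / deg H z - f x / deg H x) * deg H z := by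
    rw [sub_mul, div_mul_cancel₀ _ (hd z).ne']
  simp only [Pi.sub_apply, Pi.smul_apply, smul_eq_mul]
  rw [hfz, abs_mul, abs_of_pos (hd z)]
  refine mul_le_mul_of_nonneg_right ?_ (hd z).le
  rw [abs_le]
  constructor <;> linarith [gdist_le_hdiam (H := H) z x, gdist_le_hdiam (H := H) x z]

variable (hg : ∀ e ∈ H.E, e.card = 2) (hd : ∀ x, 0 < deg H x)
include hg hd

lemma lazy_sub_resolvent {l : ℝ} (hl : 0 ≤ l) (f : V → ℝ) :
    f - l • graphLap H f - Resolvent H l f =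
      -(l ^ 2) • graphLap H (graphLap H (Resolvent H l f)) := by
  set g := Resolvent H l f
  have hfg : f = g + l • graphLap H g := (resolvent_eq_iff hg hd hl).mp rfl
  rw [hfg, map_add, map_smul]
  module

lemma abs_inn_lazy_sub_inn_resolvent_le {l m : ℝ} (hl : 0 ≤ l) {f : V → ℝ}
    (hm : ∀ z, |f z| ≤ m * deg H z) (a b : V) :
    |inn H (f - l • graphLap H f) (delta a - delta b) -
      inn H (Resolvent H l f) (delta a - delta b)| ≤ 8 * m * l ^ 2 := by
  have hg₀ := abs_le_of_eq_add_smul_graphLap hg hd hl hm ((resolvent_eq_iff hg hd hl).mp rfl)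
  have hg₂ := abs_graphLap_le hg hd (abs_graphLap_le hg hd hg₀)
  rw [← inn_sub_left, lazy_sub_resolvent hg hd hl]
  refine (abs_inn_delta_sub_delta_le hd (m := l ^ 2 * (2 * (2 * m))) (fun z => ?_) a b).trans_eq
    (by ring)
  rw [Pi.smul_apply, smul_eq_mul, abs_mul, abs_neg, abs_of_nonneg (sq_nonneg l), mul_assoc]
  exact mul_le_mul_of_nonneg_left (hg₂ z) (sq_nonneg l)

lemma lazy_sub_smul_deg {l : ℝ} (f : V → ℝ) (c : ℝ) :
    f - c • deg H - l • graphLap H (f - c • deg H) = f - l • graphLap H f - c • deg H := by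
  rw [map_sub, map_smul, graphLap_deg hg hd, smul_zero, sub_zero]
  abel

lemma abs_inn_lazy_sub_inn_resolvent_le_of_mem_Lip1 {l : ℝ} (hl : 0 ≤ l) {f : V → ℝ}
    (hf : f ∈ Lip1 H) (x y : V) :
    |inn H (f - l • graphLap H f) (delta x - delta y) -
      inn H (Resolvent H l f) (delta x - delta y)| ≤ 8 * hdiam H * l ^ 2 := by
  have h := abs_inn_lazy_sub_inn_resolvent_le hg hd hl
    (abs_sub_smul_deg_le_of_mem_Lip1 hd hf x) x y
  rwa [lazy_sub_smul_deg hg hd, resolvent_sub_smul_deg hg hd hl, inn_sub_smul_deg hd,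
    inn_sub_smul_deg hd] at h

lemma abs_inn_resolvent_le_of_mem_Lip1 {l : ℝ} (hl : 0 ≤ l) {f : V → ℝ} (hf : f ∈ Lip1 H)
    (x y : V) : |inn H (Resolvent H l f) (delta x - delta y)| ≤ 2 * hdiam H := by
  have h := abs_inn_delta_sub_delta_le hd (abs_le_of_eq_add_smul_graphLap hg hd hl
    (abs_sub_smul_deg_le_of_mem_Lip1 hd hf x) ((resolvent_eq_iff hg hd hl).mp rfl)) x y
  rwa [resolvent_sub_smul_deg hg hd hl, inn_sub_smul_deg hd] at h

end Kantorovich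

/-- The dual expression `W_λ(x, y)` of `W₁(m_x^{1-λ}, m_y^{1-λ})`. -/
def lazyKD (H : Hypergraph V) (l : ℝ) (x y : V) : ℝ :=
  sSup {r | ∃ f ∈ Lip1 H, r = inn H (f - l • graphLap H f) (delta x - delta y)}

lemma abs_lazyKD_sub_KD_le {H : Hypergraph V} (hg : ∀ e ∈ H.E, e.card = 2)
    (hd : ∀ x, 0 < deg H x) {l : ℝ} (hl : 0 ≤ l) (x y : V) :
    |lazyKD H l x y - KD H l x y| ≤ 8 * hdiam H * l ^ 2 :=
  abs_csSup_sub_csSup_le ⟨0, zero_mem_Lip1⟩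
    ⟨2 * hdiam H, by
      rintro _ ⟨f, hf, rfl⟩
      exact (le_abs_self _).trans (abs_inn_resolvent_le_of_mem_Lip1 hg hd hl hf x y)⟩
    fun _ hf => abs_inn_lazy_sub_inn_resolvent_le_of_mem_Lip1 hg hd hl hf x y

theorem stmt19_general (H : Hypergraph V)
    (hdeg : ∀ x : V, 0 < deg H x)
    (hgraph : ∀ e ∈ H.E, e.card = 2) (x y : V) :
    Filter.Tendsto
      (fun l : ℝ =>
        |sSup { r : ℝ | ∃ f ∈ Lip1 H,
            r = inn H
              (fun z => f z - l * (f z - ∑ y' : V,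
                (∑ e ∈ H.E, if e = ({z, y'} : Finset V) then H.w e else 0)
                  * f y' / deg H y'))
              (delta x - delta y) }
          - KD H l x y| / l)
      (nhdsWithin 0 (Set.Ioi 0)) (nhds 0) := by
  change Filter.Tendsto (fun l => |lazyKD H l x y - KD H l x y| / l) _ _
  have hbound : ∀ l ∈ Set.Ioi (0 : ℝ), |lazyKD H l x y - KD H l x y| / l ≤ 8 * hdiam H * l :=
    fun l hl => by
      rw [div_le_iff₀ hl]
      exact (abs_lazyKD_sub_KD_le hgraph hdeg hl.le x y).trans_eq (by ring)
  have hlin : Filter.Tendsto (fun l : ℝ => 8 * hdiam H * l) (nhdsWithin 0 (Set.Ioi 0)) (nhds 0) :=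
    tendsto_nhdsWithin_of_tendsto_nhds <| by
      simpa using (continuous_const_mul (8 * hdiam H)).tendsto 0
  refine tendsto_of_tendsto_of_tendsto_of_le_of_le' tendsto_const_nhds hlin ?_ ?_
  · filter_upwards [self_mem_nhdsWithin] with l hl
    exact div_nonneg (abs_nonneg _) (le_of_lt hl)
  · filter_upwards [self_mem_nhdsWithin] with l hl using hbound l hl

/-- for graphs (each hyperedge has exactly two elements), the
Kantorovich–Rubinstein dual expression
`W_λ(x,y) = sup{⟨f − λ(D−A)D⁻¹f, δ_x − δ_y⟩ : f ∈ Lip_w^1(V)}` of the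
`L¹`-Wasserstein distance between the lazy random-walk measures satisfies
`lim_{λ↓0} |W_λ(x,y) − KD_λ(x,y)|/λ = 0` for all `x ≠ y`. -/
theorem stmt19 [Nonempty V] (H : Hypergraph V) (hconn : Connected H)
    (hdeg : ∀ x : V, 0 < deg H x)
    (hgraph : ∀ e ∈ H.E, e.card = 2) (x y : V) (hxy : x ≠ y) :
    Filter.Tendsto
      (fun l : ℝ =>
        |sSup { r : ℝ | ∃ f ∈ Lip1 H,
            r = inn H
              (fun z => f z - l * (f z - ∑ y' : V,
                (∑ e ∈ H.E, if e = ({z, y'} : Finset V) then H.w e else 0)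
                  * f y' / deg H y'))
              (delta x - delta y) }
          - KD H l x y| / l)
      (nhdsWithin 0 (Set.Ioi 0)) (nhds 0) :=
  stmt19_general H hdeg hgraph x y

end HypRicci
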